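/- The following four identities hold in End(V): (qAK* − q^{−1}K*A)/(q − q^{−1}) = a·I, (qK*^{−1}B − q^{−1}BK*^{−1})/(q − q^{−1}) = b·I, (qA*K*^{−1} − q^{−1}K*^{−1}A*)/(q − q^{−1}) = a*·I, and (qK*B* − q^{−1}B*K*)/(q − q^{−1}) = b*·I. -/

import Mathlib

noncomputable section

open Submodule

variable {K : Type*} [Field K]

/-- `[n]_q = (q^n − q^{−n})/(q − q^{−1})`. -/
def qInt (q : K) (n : ℤ) : K := (q ^ n - q ^ (-n)) / (q - q⁻¹)

/-- Elements `y₀⁺, y₁⁺, y₀⁻, y₁⁻, k₀, k₀⁻¹, k₁, k₁⁻¹` of a unital associative `K`-algebra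
satisfy the alternate relations. -/
structure AlternateRelations (q : K) {A : Type*} [Ring A] [Algebra K A]
    (yp ym k kinv : Fin 2 → A) : Prop where
  k_kinv : ∀ i, k i * kinv i = 1
  kinv_k : ∀ i, kinv i * k i = 1
  central_yp : ∀ i, k 0 * k 1 * yp i = yp i * (k 0 * k 1)
  central_ym : ∀ i, k 0 * k 1 * ym i = ym i * (k 0 * k 1)
  central_k : ∀ i, k 0 * k 1 * k i = k i * (k 0 * k 1)
  central_kinv : ∀ i, k 0 * k 1 * kinv i = kinv i * (k 0 * k 1)
  rel_yp_k : ∀ i, (q - q⁻¹)⁻¹ • (q • (yp i * k i) - q⁻¹ • (k i * yp i)) = 1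
  rel_k_ym : ∀ i, (q - q⁻¹)⁻¹ • (q • (k i * ym i) - q⁻¹ • (ym i * k i)) = 1
  rel_ym_yp : ∀ i, (q - q⁻¹)⁻¹ • (q • (ym i * yp i) - q⁻¹ • (yp i * ym i)) = 1
  rel_yp_ym : ∀ i j, i ≠ j →
    (q - q⁻¹)⁻¹ • (q • (yp i * ym j) - q⁻¹ • (ym j * yp i)) = kinv 0 * kinv 1
  serre_p : ∀ i j, i ≠ j →
    yp i ^ 3 * yp j - qInt q 3 • (yp i ^ 2 * yp j * yp i)
      + qInt q 3 • (yp i * yp j * yp i ^ 2) - yp j * yp i ^ 3 = 0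
  serre_m : ∀ i j, i ≠ j →
    ym i ^ 3 * ym j - qInt q 3 • (ym i ^ 2 * ym j * ym i)
      + qInt q 3 • (ym i * ym j * ym i ^ 2) - ym j * ym i ^ 3 = 0

/-- Elements `e₀⁺, e₁⁺, e₀⁻, e₁⁻, K₀, K₀⁻¹, K₁, K₁⁻¹` of a unital associative `K`-algebra
satisfy the Chevalley relations of `U_q(sl₂ hat)`. -/
structure ChevalleyRelations (q : K) {A : Type*} [Ring A] [Algebra K A]
    (ep em Kg Kginv : Fin 2 → A) : Prop where
  K_Kinv : ∀ i, Kg i * Kginv i = 1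
  Kinv_K : ∀ i, Kginv i * Kg i = 1
  K_comm : Kg 0 * Kg 1 = Kg 1 * Kg 0
  KepK_same : ∀ i, Kg i * ep i * Kginv i = (q ^ (2 : ℤ)) • ep i
  KemK_same : ∀ i, Kg i * em i * Kginv i = (q ^ (-2 : ℤ)) • em i
  KepK_diff : ∀ i j, i ≠ j → Kg i * ep j * Kginv i = (q ^ (-2 : ℤ)) • ep j
  KemK_diff : ∀ i j, i ≠ j → Kg i * em j * Kginv i = (q ^ (2 : ℤ)) • em j
  e_comm_same : ∀ i, ep i * em i - em i * ep i = (q - q⁻¹)⁻¹ • (Kg i - Kginv i)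
  e_comm_diff : ∀ i j, i ≠ j → ep i * em j = em j * ep i
  serre_p : ∀ i j, i ≠ j →
    ep i ^ 3 * ep j - qInt q 3 • (ep i ^ 2 * ep j * ep i)
      + qInt q 3 • (ep i * ep j * ep i ^ 2) - ep j * ep i ^ 3 = 0
  serre_m : ∀ i j, i ≠ j →
    em i ^ 3 * em j - qInt q 3 • (em i ^ 2 * em j * em i)
      + qInt q 3 • (em i * em j * em i ^ 2) - em j * em i ^ 3 = 0

variable {V : Type*} [AddCommGroup V] [Module K V]

/-- A decomposition of `V` of length `d`: nonzero subspaces `U 0, …, U d`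
(indexed by `ℤ`, with `U i = ⊥` outside `[0, d]`) whose direct sum is `V`. -/
structure IsDecomposition (d : ℕ) (U : ℤ → Submodule K V) : Prop where
  bot_of_lt : ∀ i : ℤ, i < 0 → U i = ⊥
  bot_of_gt : ∀ i : ℤ, (d : ℤ) < i → U i = ⊥
  ne_bot : ∀ i : ℤ, 0 ≤ i → i ≤ (d : ℤ) → U i ≠ ⊥
  indep : iSupIndep U
  sup_eq_top : ⨆ i, U i = ⊤

/-- `A, A*` is a tridiagonal pair on `V` with standard orderings `Vs 0, …, Vs d` and
`Vs' 0, …, Vs' d` of the eigenspaces of `A` resp. `A*`, with corresponding eigenvalues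
`θ i` resp. `θ' i`. -/
structure IsTridiagonalPair (A A' : Module.End K V) (d : ℕ)
    (Vs Vs' : ℤ → Submodule K V) (θ θ' : ℤ → K) : Prop where
  decompV : IsDecomposition d Vs
  decompV' : IsDecomposition d Vs'
  eig : ∀ i : ℤ, ∀ v ∈ Vs i, A v = θ i • v
  eig' : ∀ i : ℤ, ∀ v ∈ Vs' i, A' v = θ' i • v
  theta_inj : ∀ i j : ℤ, 0 ≤ i → i ≤ (d : ℤ) → 0 ≤ j → j ≤ (d : ℤ) → θ i = θ j → i = j
  theta'_inj : ∀ i j : ℤ, 0 ≤ i → i ≤ (d : ℤ) → 0 ≤ j → j ≤ (d : ℤ) → θ' i = θ' j → i = j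
  trid : ∀ i : ℤ, (Vs i).map A' ≤ Vs (i - 1) ⊔ Vs i ⊔ Vs (i + 1)
  trid' : ∀ i : ℤ, (Vs' i).map A ≤ Vs' (i - 1) ⊔ Vs' i ⊔ Vs' (i + 1)
  irred : ∀ W : Submodule K V, W.map A ≤ W → W.map A' ≤ W → W = ⊥ ∨ W = ⊤

/-- The sum `U m + U (m+1) + ⋯ + U n`. -/
def sumIcc (U : ℤ → Submodule K V) (m n : ℤ) : Submodule K V :=
  ⨆ j ∈ Set.Icc m n, U j

/-- Decomposition `[0D]`: the `i`-th subspace is `V_i`. -/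
def dec0D (Vs : ℤ → Submodule K V) : ℤ → Submodule K V := Vs

/-- Decomposition `[0*D*]`: the `i`-th subspace is `V*_i`. -/
def dec0sDs (Vs' : ℤ → Submodule K V) : ℤ → Submodule K V := Vs'

/-- Decomposition `[0*D]`: the `i`-th subspace is `(V*_0+⋯+V*_i) ∩ (V_i+⋯+V_d)`. -/
def dec0sD (d : ℕ) (Vs Vs' : ℤ → Submodule K V) (i : ℤ) : Submodule K V :=
  sumIcc Vs' 0 i ⊓ sumIcc Vs i (d : ℤ)

/-- Decomposition `[0*0]`: the `i`-th subspace is `(V*_0+⋯+V*_i) ∩ (V_0+⋯+V_{d−i})`. -/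
def dec0s0 (d : ℕ) (Vs Vs' : ℤ → Submodule K V) (i : ℤ) : Submodule K V :=
  sumIcc Vs' 0 i ⊓ sumIcc Vs 0 ((d : ℤ) - i)

/-- Decomposition `[D*0]`: the `i`-th subspace is `(V*_{d−i}+⋯+V*_d) ∩ (V_0+⋯+V_{d−i})`. -/
def decDs0 (d : ℕ) (Vs Vs' : ℤ → Submodule K V) (i : ℤ) : Submodule K V :=
  sumIcc Vs' ((d : ℤ) - i) (d : ℤ) ⊓ sumIcc Vs 0 ((d : ℤ) - i)

/-- Decomposition `[D*D]`: the `i`-th subspace is `(V*_{d−i}+⋯+V*_d) ∩ (V_i+⋯+V_d)`. -/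
def decDsD (d : ℕ) (Vs Vs' : ℤ → Submodule K V) (i : ℤ) : Submodule K V :=
  sumIcc Vs' ((d : ℤ) - i) (d : ℤ) ⊓ sumIcc Vs i (d : ℤ)

/-!
Each identity has the shape `[Y, X]_q = c` where `X` acts diagonally, with `q`-geometric
eigenvalues, on one of the decompositions `[D*0]`, `[0*0]`, `[D*D]`, and `Y` moves the `i`-th
summand into the neighbouring one modulo scalars; expanding `[Y, X]_q` on a summand, the
off-diagonal terms cancel. For `Y = A, A*` the shift comes from tridiagonality, and the summands
span `V` by irreducibility. For `Y = K*^{±1}` one needs how `K*^{±1}` moves the flags of `V_j`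
and `V*_j`: the relations already proven for `A` and `A*` force `K* V_j ⊆ V_{j-1} + V_j` and
`K*⁻¹ V*_j ⊆ V*_j + V*_{j+1}`, while `(V*_m + ⋯ + V*_d) ∩ (V_0 + ⋯ + V_{m-1}) = 0` (again by
irreducibility) writes the remaining flags as partial sums of `[D*0]`, on which `K*` is diagonal.
-/

theorem zpow_injective_of_pow_ne_one {q : K} (hq0 : q ≠ 0) (hq : ∀ n : ℕ, 0 < n → q ^ n ≠ 1) :
    Function.Injective fun n : ℤ => q ^ n := by
  set u := Units.mk0 q hq0
  have hu : ¬IsOfFinOrder u := by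
    rw [isOfFinOrder_iff_pow_eq_one]
    rintro ⟨n, hn, h⟩
    exact hq n hn (by simpa [u] using congrArg Units.val h)
  intro m n h
  apply injective_zpow_iff_not_isOfFinOrder.mpr hu
  ext
  simpa [u] using h

theorem zpow_eq_sq_mul_zpow {q : K} (hq : q ≠ 0) {m n : ℤ} (h : m = n + 2) :
    q ^ m = q ^ 2 * q ^ n := by
  rw [h, zpow_add₀ hq, zpow_two, sq, mul_comm]

theorem zpow_mul_zpow_eq_one {q : K} (hq : q ≠ 0) {m n : ℤ} (h : m + n = 0) :
    q ^ m * q ^ n = 1 := by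
  rw [← zpow_add₀ hq, h, zpow_zero]

theorem sub_inv_ne_zero_of_sq_ne_one {q : K} (hq : q ≠ 0) (h : q ^ 2 ≠ 1) : q - q⁻¹ ≠ 0 := by
  intro h'
  apply h
  field_simp at h'
  linear_combination h'

section sumIcc

variable {U : ℤ → Submodule K V} {m n m' n' : ℤ}

theorem le_sumIcc {j : ℤ} (hm : m ≤ j) (hn : j ≤ n) : U j ≤ sumIcc U m n :=
  le_biSup U ⟨hm, hn⟩

theorem sumIcc_le {W : Submodule K V} (h : ∀ j, m ≤ j → j ≤ n → U j ≤ W) : sumIcc U m n ≤ W :=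
  iSup₂_le fun j hj => h j hj.1 hj.2

theorem sumIcc_mono (hm : m' ≤ m) (hn : n ≤ n') : sumIcc U m n ≤ sumIcc U m' n' :=
  sumIcc_le fun _ hj hj' => le_sumIcc (hm.trans hj) (hj'.trans hn)

theorem sumIcc_eq_bot (h : n < m) : sumIcc U m n = ⊥ := by
  simp [sumIcc, Set.Icc_eq_empty_of_lt h]

theorem sumIcc_inf_sumIcc_eq_bot {U' : ℤ → Submodule K V} (h : n < m ∨ n' < m') :
    sumIcc U m n ⊓ sumIcc U' m' n' = ⊥ := by
  rcases h with h | h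
  · rw [sumIcc_eq_bot h, bot_inf_eq]
  · rw [sumIcc_eq_bot h, inf_bot_eq]

theorem sumIcc_self (m : ℤ) : sumIcc U m m = U m := by
  simp [sumIcc]

theorem map_sumIcc_le {F : Module.End K V} {W : Submodule K V}
    (h : ∀ j, m ≤ j → j ≤ n → (U j).map F ≤ W) : (sumIcc U m n).map F ≤ W :=
  map_le_iff_le_comap.mpr (sumIcc_le fun j hm hn => map_le_iff_le_comap.mp (h j hm hn))

end sumIcc

section Decomposition

variable {d : ℕ} {U : ℤ → Submodule K V}

theorem IsDecomposition.eq_bot_of_lt_or_gt (hU : IsDecomposition d U) {i : ℤ}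
    (hi : i < 0 ∨ d < i) : U i = ⊥ :=
  hi.elim (hU.bot_of_lt i) (hU.bot_of_gt i)

theorem IsDecomposition.le_sumIcc_of_imp (hU : IsDecomposition d U) {j m n : ℤ}
    (h : 0 ≤ j → j ≤ d → m ≤ j ∧ j ≤ n) : U j ≤ sumIcc U m n := by
  by_cases hj : 0 ≤ j ∧ j ≤ d
  · exact le_sumIcc (h hj.1 hj.2).1 (h hj.1 hj.2).2
  · simp [hU.eq_bot_of_lt_or_gt (by omega : j < 0 ∨ d < j)]

theorem IsDecomposition.sumIcc_zero_eq_top (hU : IsDecomposition d U) : sumIcc U 0 d = ⊤ :=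
  top_unique (hU.sup_eq_top ▸ iSup_le fun _ => hU.le_sumIcc_of_imp fun h0 hd => ⟨h0, hd⟩)

theorem IsDecomposition.sumIcc_zero_pred_ne_top (hU : IsDecomposition d U) :
    sumIcc U 0 (d - 1) ≠ ⊤ := fun h =>
  hU.ne_bot d (by omega) le_rfl
    (disjoint_top.mp (h ▸ hU.indep.disjoint_biSup (by simp)))

end Decomposition

theorem apply_eq_smul_of_eq_bot {P : ℤ → Submodule K V} {F : Module.End K V} {μ : ℤ → K}
    {d : ℤ} (hbot : ∀ i, i < 0 ∨ d < i → P i = ⊥)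
    (h : ∀ i, 0 ≤ i → i ≤ d → ∀ v ∈ P i, F v = μ i • v) : ∀ i, ∀ v ∈ P i, F v = μ i • v := by
  intro i v hv
  by_cases hi : 0 ≤ i ∧ i ≤ d
  · exact h i hi.1 hi.2 v hv
  · rw [hbot i (by omega)] at hv
    simp [(mem_bot K).mp hv]

section Diagonal

variable {ι : Type*} {U : ι → Submodule K V} {F : Module.End K V} {μ : ι → K}

theorem sub_smul_one_apply_of_mem (hF : ∀ k, ∀ v ∈ U k, F v = μ k • v) {k : ι} {v : V}
    (hv : v ∈ U k) (c : K) : (F - c • 1) v = (μ k - c) • v := by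
  simp [hF k v hv, sub_smul]

theorem map_sub_smul_one_le_self (hF : ∀ k, ∀ v ∈ U k, F v = μ k • v) (k : ι) (c : K) :
    (U k).map (F - c • 1) ≤ U k := by
  rintro _ ⟨v, hv, rfl⟩
  rw [sub_smul_one_apply_of_mem hF hv]
  exact smul_mem _ _ hv

theorem map_sub_smul_one_le_of_ne (hF : ∀ k, ∀ v ∈ U k, F v = μ k • v) {j k : ι}
    {W : Submodule K V} (hW : j ≠ k → U j ≤ W) : (U j).map (F - μ k • 1) ≤ W := by
  rintro _ ⟨v, hv, rfl⟩
  rw [sub_smul_one_apply_of_mem hF hv]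
  rcases eq_or_ne j k with rfl | hjk
  · simp
  · exact smul_mem _ _ (hW hjk hv)

theorem map_sub_smul_one_le_of_le_biSup (hF : ∀ k, ∀ v ∈ U k, F v = μ k • v) {S : Set ι}
    {X Y : Submodule K V} {i : ι} (hX : X ≤ ⨆ j ∈ S, U j) (hY : ∀ j ∈ S, j ≠ i → U j ≤ Y) :
    X.map (F - μ i • 1) ≤ Y :=
  (map_mono hX).trans <| map_le_iff_le_comap.mpr <| iSup₂_le fun j hj =>
    map_le_iff_le_comap.mp (map_sub_smul_one_le_of_ne hF (hY j hj))

theorem map_iSup_le_of_map_sub_smul_one_le {c : ι → K} {σ : ι → ι}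
    (h : ∀ i, (U i).map (F - c i • 1) ≤ U (σ i)) : (⨆ i, U i).map F ≤ ⨆ i, U i := by
  rw [Submodule.map_iSup]
  refine iSup_le fun i => ?_
  rintro _ ⟨v, hv, rfl⟩
  have hFv : F v = (F - c i • 1) v + c i • v := by simp
  rw [hFv]
  exact add_mem (mem_iSup_of_mem (σ i) (h i ⟨v, hv, rfl⟩)) (smul_mem _ _ (mem_iSup_of_mem i hv))

end Diagonal

theorem map_inf_le_inf {F : Module.End K V} {X Y X' Y' : Submodule K V} (hX : X.map F ≤ X')
    (hY : Y.map F ≤ Y') : (X ⊓ Y).map F ≤ X' ⊓ Y' :=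
  (map_inf_le F).trans (inf_le_inf hX hY)

theorem map_sub_smul_one_le {G : Module.End K V} {X Y : Submodule K V} (h : X.map G ≤ Y)
    (hXY : X ≤ Y) (c : K) : X.map (G - c • 1) ≤ Y := by
  rintro _ ⟨v, hv, rfl⟩
  simpa using sub_mem (h ⟨v, hv, rfl⟩) (smul_mem _ c (hXY hv))

theorem apply_eq_smul_of_mul_eq_one {F G : Module.End K V} (h : G * F = 1) {v : V} {c c' : K}
    (hF : F v = c • v) (hc : c * c' = 1) : G v = c' • v := by
  have hFv : F (c' • v) = v := by rw [map_smul, hF, smul_smul, mul_comm, hc, one_smul]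
  calc G v = (G * F) (c' • v) := by rw [Module.End.mul_apply, hFv]
    _ = c' • v := by rw [h, Module.End.one_apply]

theorem eq_biSup_of_disjoint {α ι : Type*} [CompleteLattice α] [IsModularLattice α]
    {P : ι → α} {S : Set ι} {X Y : α} (htop : ⨆ i, P i = ⊤) (hX : ∀ i ∈ S, P i ≤ X)
    (hY : ∀ i ∉ S, P i ≤ Y) (hXY : Disjoint X Y) : X = ⨆ i ∈ S, P i := by
  have hsup : (⨆ i ∈ S, P i) ⊔ Y = ⊤ := by
    refine top_unique (htop ▸ iSup_le fun i => ?_)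
    by_cases hi : i ∈ S
    · exact le_sup_of_le_left (le_biSup P hi)
    · exact le_sup_of_le_right (hY i hi)
  calc X = ((⨆ i ∈ S, P i) ⊔ Y) ⊓ X := by rw [hsup, top_inf_eq]
    _ = (⨆ i ∈ S, P i) ⊔ Y ⊓ X := sup_inf_assoc_of_le _ (iSup₂_le hX)
    _ = ⨆ i ∈ S, P i := by rw [hXY.symm.eq_bot, sup_bot_eq]

section Flags

variable {U : ℤ → Submodule K V} {F : Module.End K V} {μ : ℤ → K} {m n m' n' : ℤ}

theorem map_sub_smul_sumIcc_le_pred (hF : ∀ k, ∀ v ∈ U k, F v = μ k • v) (hm : m' ≤ m)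
    (hn : n ≤ n' + 1) : (sumIcc U m n).map (F - μ n • 1) ≤ sumIcc U m' n' :=
  map_sumIcc_le fun _ _ _ => map_sub_smul_one_le_of_ne hF fun _ => le_sumIcc (by omega) (by omega)

theorem map_sub_smul_sumIcc_le_succ (hF : ∀ k, ∀ v ∈ U k, F v = μ k • v) (hm : m' ≤ m + 1)
    (hn : n ≤ n') : (sumIcc U m n).map (F - μ m • 1) ≤ sumIcc U m' n' :=
  map_sumIcc_le fun _ _ _ => map_sub_smul_one_le_of_ne hF fun _ => le_sumIcc (by omega) (by omega)

theorem IsDecomposition.map_sub_smul_sumIcc_le {d : ℕ} (hU : IsDecomposition d U)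
    {G : Module.End K V} (htrid : ∀ i, (U i).map G ≤ U (i - 1) ⊔ U i ⊔ U (i + 1)) (c : K)
    (hm : m' + 1 ≤ m ∨ m' ≤ 0) (hn : n + 1 ≤ n' ∨ (d : ℤ) ≤ n') :
    (sumIcc U m n).map (G - c • 1) ≤ sumIcc U m' n' := by
  refine map_sumIcc_le fun j hj hj' => map_sub_smul_one_le ((htrid j).trans ?_) ?_ c
  · refine sup_le (sup_le ?_ ?_) ?_ <;> exact hU.le_sumIcc_of_imp (by omega)
  · exact hU.le_sumIcc_of_imp (by omega)

theorem IsDecomposition.mem_biSup_of_sub_smul_mem {d : ℕ} (hU : IsDecomposition d U)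
    (hF : ∀ k, ∀ v ∈ U k, F v = μ k • v) {S : Set ℤ} {c : K} (hc : ∀ k ∉ S, μ k ≠ c) {u : V}
    (hu : F u - c • u ∈ ⨆ k ∈ S, U k) : u ∈ ⨆ k ∈ S, U k := by
  set G := F - c • 1
  have hG : ∀ T : Set ℤ, (⨆ k ∈ T, U k).map G ≤ ⨆ k ∈ T, U k := fun T =>
    map_le_iff_le_comap.mpr <| iSup₂_le fun k hk =>
      (map_le_iff_le_comap.mp (map_sub_smul_one_le_self hF k c)).trans
        (comap_mono (le_biSup U hk))
  have hsplit : u ∈ (⨆ k ∈ S, U k) ⊔ ⨆ k ∈ Sᶜ, U k := by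
    rw [← iSup_union, Set.union_compl_self, iSup_univ, hU.sup_eq_top]
    trivial
  obtain ⟨f, hf, g, hg, rfl⟩ := mem_sup.mp hsplit
  have hGg : G g = 0 := by
    have hGS : G g ∈ ⨆ k ∈ S, U k := by
      have : G g = (F (f + g) - c • (f + g)) - G f := by
        simp only [G, LinearMap.sub_apply, LinearMap.smul_apply, Module.End.one_apply, map_add,
          smul_add]
        abel
      rw [this]
      exact sub_mem hu (hG S ⟨f, hf, rfl⟩)
    exact (mem_bot K).mp
      ((hU.indep.disjoint_biSup_biSup disjoint_compl_right).le_bot ⟨hGS, hG Sᶜ ⟨g, hg, rfl⟩⟩)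
  -- The component of `u` outside `S` is an eigenvector for `c`, but lies in eigenspaces for
  -- eigenvalues other than `c`.
  have hgc : g ∈ F.eigenspace c :=
    Module.End.mem_eigenspace_iff.mpr (sub_eq_zero.mp (by simpa [G] using hGg))
  have hgS : g ∈ ⨆ (ν) (_ : ν ≠ c), F.eigenspace ν :=
    iSup₂_le (fun k hk => le_iSup₂_of_le (f := fun ν (_ : ν ≠ c) => F.eigenspace ν) (μ k)
      (hc k hk) fun v hv => Module.End.mem_eigenspace_iff.mpr (hF k v hv)) hg
  have hg0 : g = 0 := (mem_bot K).mp ((Module.End.eigenspaces_iSupIndep F c).le_bot ⟨hgc, hgS⟩)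
  simpa [hg0] using hf

end Flags

def qComm (q : K) (X Y : Module.End K V) : Module.End K V :=
  (q - q⁻¹)⁻¹ • (q • (X * Y) - q⁻¹ • (Y * X))

section qComm

variable {q r : K}

theorem qComm_eq_smul_one_iff (hqq : q - q⁻¹ ≠ 0) {X Y : Module.End K V} :
    qComm q X Y = r • 1 ↔ q • (X * Y) - q⁻¹ • (Y * X) = ((q - q⁻¹) * r) • 1 := by
  rw [qComm, inv_smul_eq_iff₀ hqq, smul_smul]

theorem qComm_eq_smul_one (hqq : q - q⁻¹ ≠ 0) {ι : Type*} {U : ι → Submodule K V}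
    (htop : ⨆ i, U i = ⊤) {X Y : Module.End K V} {s g : ι → K} {σ : ι → ι}
    (hX : ∀ i, ∀ v ∈ U i, X v = s i • v) (hY : ∀ i, (U i).map (Y - g i • 1) ≤ U (σ i))
    (hs : ∀ i, s (σ i) = q ^ 2 * s i) (hg : ∀ i, g i * s i = r) : qComm q Y X = r • 1 := by
  rw [qComm_eq_smul_one_iff hqq]
  ext v
  refine iSup_induction U (motive := fun v =>
    (q • (Y * X) - q⁻¹ • (X * Y)) v = (((q - q⁻¹) * r) • (1 : Module.End K V)) v)
    (htop ▸ mem_top) (fun i v hv => ?_) (by simp) (fun v w hv hw => by simp only [map_add, hv, hw])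
  obtain ⟨w, hw, hYv⟩ : ∃ w ∈ U (σ i), Y v = g i • v + w := ⟨_, hY i ⟨v, hv, rfl⟩, by simp⟩
  simp only [LinearMap.sub_apply, LinearMap.smul_apply, Module.End.mul_apply,
    Module.End.one_apply, hX i v hv, map_smul, hYv, map_add, hX _ w hw, hs i, ← hg i]
  match_scalars
  · ring
  · field_simp
    ring

theorem IsDecomposition.map_sumIcc_le_of_qComm (hq : q ≠ 0) (hqq : q - q⁻¹ ≠ 0) {d : ℕ}
    {U : ℤ → Submodule K V} (hU : IsDecomposition d U) {F X : Module.End K V} {μ : ℤ → K}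
    (hF : ∀ k, ∀ v ∈ U k, F v = μ k • v) (hμ : Function.Injective μ) {ε : ℤ}
    (hμq : ∀ j, μ j = q ^ 2 * μ (j + ε)) (hX : qComm q F X = r • 1) {m n m' n' : ℤ}
    (hm : m' ≤ m ∧ m' ≤ m + ε) (hn : n ≤ n' ∧ n + ε ≤ n') :
    (sumIcc U m n).map X ≤ sumIcc U m' n' := by
  refine map_sumIcc_le fun j hj hj' => ?_
  rintro _ ⟨v, hv, rfl⟩
  refine hU.mem_biSup_of_sub_smul_mem hF (S := Set.Icc m' n') (c := μ (j + ε))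
    (fun k hk h => hk ?_) ?_
  · rw [hμ h]
    constructor <;> omega
  · have h := LinearMap.congr_fun ((qComm_eq_smul_one_iff hqq).mp hX) v
    simp only [LinearMap.sub_apply, LinearMap.smul_apply, Module.End.mul_apply,
      Module.End.one_apply, hF j v hv, map_smul, hμq j] at h
    have hXv : F (X v) - μ (j + ε) • X v = (q⁻¹ * (q - q⁻¹) * r) • v := by
      linear_combination (norm := skip) q⁻¹ • h
      match_scalars <;> field_simp <;> ring
    rw [hXv]
    exact smul_mem _ _ (le_sumIcc (by omega) (by omega) hv)

end qComm

namespace IsTridiagonalPair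

variable {A A' : Module.End K V} {d : ℕ} {Vs Vs' : ℤ → Submodule K V} {θ θ' : ℤ → K}

theorem iSup_eq_bot_or_top (hTD : IsTridiagonalPair A A' d Vs Vs' θ θ')
    {P : ℤ → Submodule K V} {c c' : ℤ → K} {σ σ' : ℤ → ℤ}
    (hA : ∀ i, (P i).map (A - c i • 1) ≤ P (σ i))
    (hA' : ∀ i, (P i).map (A' - c' i • 1) ≤ P (σ' i)) : ⨆ i, P i = ⊥ ∨ ⨆ i, P i = ⊤ :=
  hTD.irred _ (map_iSup_le_of_map_sub_smul_one_le hA) (map_iSup_le_of_map_sub_smul_one_le hA')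

theorem iSup_eq_top (hTD : IsTridiagonalPair A A' d Vs Vs' θ θ') {P : ℤ → Submodule K V}
    {c c' : ℤ → K} (hA : ∀ i, (P i).map (A - c i • 1) ≤ P (i + 1))
    (hA' : ∀ i, (P i).map (A' - c' i • 1) ≤ P (i - 1)) {i₀ : ℤ} (hP : P i₀ ≠ ⊥) :
    ⨆ i, P i = ⊤ :=
  (hTD.iSup_eq_bot_or_top hA hA').resolve_left fun h => hP (eq_bot_iff.mpr (h ▸ le_iSup P i₀))

/-- The subspaces `(V*_a + ⋯ + V*_d) ∩ (V_0 + ⋯ + V_{a-1})` are moved to neighbours by `A` and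
`A*` modulo scalars, so their sum is `0` or `V`; it cannot be `V` since it misses `V_d`. -/
theorem disjoint_sumIcc (hTD : IsTridiagonalPair A A' d Vs Vs' θ θ') {m n : ℤ} (h : n < m) :
    Disjoint (sumIcc Vs' m d) (sumIcc Vs 0 n) := by
  have hle : ⨆ a, sumIcc Vs' a d ⊓ sumIcc Vs 0 (a - 1) ≤ sumIcc Vs 0 (d - 1) := by
    refine iSup_le fun a => ?_
    by_cases ha : a ≤ d
    · exact inf_le_right.trans (sumIcc_mono le_rfl (by omega))
    · exact inf_le_left.trans ((sumIcc_eq_bot (by omega)).trans_le bot_le)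
  have hP : ⨆ a, sumIcc Vs' a d ⊓ sumIcc Vs 0 (a - 1) = ⊥ := by
    refine (hTD.iSup_eq_bot_or_top (c := fun a => θ (a - 1)) (c' := θ') (σ := fun a => a - 1)
      (σ' := fun a => a + 1) (fun a => ?_) (fun a => ?_)).resolve_right
      fun htop => hTD.decompV.sumIcc_zero_pred_ne_top (top_unique (htop ▸ hle))
    · exact map_inf_le_inf
        (hTD.decompV'.map_sub_smul_sumIcc_le hTD.trid' _ (by omega) (by omega))
        (map_sub_smul_sumIcc_le_pred hTD.eig le_rfl (by omega))
    · exact map_inf_le_inf (map_sub_smul_sumIcc_le_succ hTD.eig' le_rfl le_rfl)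
        (hTD.decompV.map_sub_smul_sumIcc_le hTD.trid _ (by omega) (by omega))
  rw [disjoint_iff, ← le_bot_iff, ← hP]
  exact (inf_le_inf_left _ (sumIcc_mono le_rfl (by omega))).trans
    (le_iSup (fun a => sumIcc Vs' a d ⊓ sumIcc Vs 0 (a - 1)) m)

theorem map_decDs0_le_succ (hTD : IsTridiagonalPair A A' d Vs Vs' θ θ') {μ : ℤ → K}
    (hA : ∀ k, ∀ v ∈ Vs k, A v = μ k • v) (i : ℤ) :
    (decDs0 d Vs Vs' i).map (A - μ (d - i) • 1) ≤ decDs0 d Vs Vs' (i + 1) :=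
  map_inf_le_inf
    (hTD.decompV'.map_sub_smul_sumIcc_le hTD.trid' _ (by omega) (by omega))
    (map_sub_smul_sumIcc_le_pred hA le_rfl (by omega))

theorem map_decDs0_le_pred (hTD : IsTridiagonalPair A A' d Vs Vs' θ θ') {μ' : ℤ → K}
    (hA' : ∀ k, ∀ v ∈ Vs' k, A' v = μ' k • v) (i : ℤ) :
    (decDs0 d Vs Vs' i).map (A' - μ' (d - i) • 1) ≤ decDs0 d Vs Vs' (i - 1) :=
  map_inf_le_inf (map_sub_smul_sumIcc_le_succ hA' (by omega) le_rfl)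
    (hTD.decompV.map_sub_smul_sumIcc_le hTD.trid _ (by omega) (by omega))

theorem iSup_decDs0_eq_top (hTD : IsTridiagonalPair A A' d Vs Vs' θ θ') :
    ⨆ i, decDs0 d Vs Vs' i = ⊤ := by
  refine hTD.iSup_eq_top (hTD.map_decDs0_le_succ hTD.eig) (hTD.map_decDs0_le_pred hTD.eig')
    (i₀ := d) ?_
  rw [decDs0, sub_self, sumIcc_self, hTD.decompV'.sumIcc_zero_eq_top, top_inf_eq]
  exact hTD.decompV.ne_bot 0 le_rfl (by omega)

theorem iSup_dec0s0_eq_top (hTD : IsTridiagonalPair A A' d Vs Vs' θ θ') :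
    ⨆ i, dec0s0 d Vs Vs' i = ⊤ := by
  refine hTD.iSup_eq_top (c := fun i => θ (d - i)) (c' := θ') (i₀ := 0)
    (fun i => map_inf_le_inf
      (hTD.decompV'.map_sub_smul_sumIcc_le hTD.trid' _ (by omega) (by omega))
      (map_sub_smul_sumIcc_le_pred hTD.eig le_rfl (by omega)))
    (fun i => map_inf_le_inf (map_sub_smul_sumIcc_le_pred hTD.eig' le_rfl (by omega))
      (hTD.decompV.map_sub_smul_sumIcc_le hTD.trid _ (by omega) (by omega))) ?_
  rw [dec0s0, sumIcc_self, sub_zero, hTD.decompV.sumIcc_zero_eq_top, inf_top_eq]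
  exact hTD.decompV'.ne_bot 0 le_rfl (by omega)

theorem iSup_decDsD_eq_top (hTD : IsTridiagonalPair A A' d Vs Vs' θ θ') :
    ⨆ i, decDsD d Vs Vs' i = ⊤ := by
  refine hTD.iSup_eq_top (c := θ) (c' := fun i => θ' (d - i)) (i₀ := 0)
    (fun i => map_inf_le_inf
      (hTD.decompV'.map_sub_smul_sumIcc_le hTD.trid' _ (by omega) (by omega))
      (map_sub_smul_sumIcc_le_succ hTD.eig le_rfl le_rfl))
    (fun i => map_inf_le_inf (map_sub_smul_sumIcc_le_succ hTD.eig' (by omega) le_rfl)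
      (hTD.decompV.map_sub_smul_sumIcc_le hTD.trid _ (by omega) (by omega))) ?_
  rw [decDsD, sub_zero, sumIcc_self, hTD.decompV.sumIcc_zero_eq_top, inf_top_eq]
  exact hTD.decompV'.ne_bot d (by omega) le_rfl

variable {D : Module.End K V} {s : ℤ → K}

-- `V_0 + ⋯ + V_{d-i}` is the sum of the `[D*0]`-summands of index `≥ i`.
theorem map_sub_smul_sumIcc_zero_le_of_decDs0 (hTD : IsTridiagonalPair A A' d Vs Vs' θ θ')
    (hD : ∀ j, ∀ v ∈ decDs0 d Vs Vs' j, D v = s j • v) (i : ℤ) :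
    (sumIcc Vs 0 (d - i)).map (D - s i • 1) ≤ sumIcc Vs 0 (d - (i + 1)) := by
  refine map_sub_smul_one_le_of_le_biSup hD (S := Set.Ici i)
    (eq_biSup_of_disjoint hTD.iSup_decDs0_eq_top (fun j hj => ?_) (fun j hj => ?_)
      (hTD.disjoint_sumIcc (m := d - i + 1) (by omega)).symm).le fun j hj hji => ?_
  all_goals simp only [Set.mem_Ici, not_le] at hj
  · exact inf_le_right.trans (sumIcc_mono le_rfl (by omega))
  · exact inf_le_left.trans (sumIcc_mono (by omega) le_rfl)
  · exact inf_le_right.trans (sumIcc_mono le_rfl (by omega))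

-- `V*_{d-i} + ⋯ + V*_d` is the sum of the `[D*0]`-summands of index `≤ i`.
theorem map_sub_smul_dual_sumIcc_le_of_decDs0 (hTD : IsTridiagonalPair A A' d Vs Vs' θ θ')
    (hD : ∀ j, ∀ v ∈ decDs0 d Vs Vs' j, D v = s j • v) (i : ℤ) :
    (sumIcc Vs' (d - i) d).map (D - s i • 1) ≤ sumIcc Vs' (d - (i - 1)) d := by
  refine map_sub_smul_one_le_of_le_biSup hD (S := Set.Iic i)
    (eq_biSup_of_disjoint hTD.iSup_decDs0_eq_top (fun j hj => ?_) (fun j hj => ?_)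
      (hTD.disjoint_sumIcc (n := d - i - 1) (by omega))).le fun j hj hji => ?_
  all_goals simp only [Set.mem_Iic, not_le] at hj
  · exact inf_le_left.trans (sumIcc_mono (by omega) le_rfl)
  · exact inf_le_right.trans (sumIcc_mono le_rfl (by omega))
  · exact inf_le_left.trans (sumIcc_mono (by omega) le_rfl)

theorem map_dec0s0_le_succ (hTD : IsTridiagonalPair A A' d Vs Vs' θ θ')
    (hD : ∀ j, ∀ v ∈ decDs0 d Vs Vs' j, D v = s j • v)
    (hflag : ∀ n, (sumIcc Vs' 0 n).map D ≤ sumIcc Vs' 0 (n + 1)) (i : ℤ) :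
    (dec0s0 d Vs Vs' i).map (D - s i • 1) ≤ dec0s0 d Vs Vs' (i + 1) :=
  map_inf_le_inf (map_sub_smul_one_le (hflag i) (sumIcc_mono le_rfl (by omega)) _)
    (hTD.map_sub_smul_sumIcc_zero_le_of_decDs0 hD i)

theorem map_decDsD_le_pred (hTD : IsTridiagonalPair A A' d Vs Vs' θ θ')
    (hD : ∀ j, ∀ v ∈ decDs0 d Vs Vs' j, D v = s j • v)
    (hflag : ∀ m, (sumIcc Vs m d).map D ≤ sumIcc Vs (m - 1) d) (i : ℤ) :
    (decDsD d Vs Vs' i).map (D - s i • 1) ≤ decDsD d Vs Vs' (i - 1) :=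
  map_inf_le_inf (hTD.map_sub_smul_dual_sumIcc_le_of_decDs0 hD i)
    (map_sub_smul_one_le (hflag i) (sumIcc_mono (by omega) le_rfl) _)

variable {q a a' : K} {Ks Ksinv : Module.End K V}

theorem qComm_A_eq_of_decDs0 (hq : q ≠ 0) (hqq : q - q⁻¹ ≠ 0)
    (hTD : IsTridiagonalPair A A' d Vs Vs' θ θ')
    (hA : ∀ k, ∀ v ∈ Vs k, A v = (a * q ^ (2 * k - d)) • v)
    (hKs : ∀ i, ∀ v ∈ decDs0 d Vs Vs' i, Ks v = q ^ (2 * i - d) • v) : qComm q A Ks = a • 1 :=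
  qComm_eq_smul_one hqq hTD.iSup_decDs0_eq_top hKs (hTD.map_decDs0_le_succ hA)
    (fun _ => zpow_eq_sq_mul_zpow hq (by ring))
    fun i => by linear_combination a * zpow_mul_zpow_eq_one hq (m := 2 * (d - i) - d) (n := 2 * i - d) (by ring)

theorem qComm_A'_eq_of_decDs0 (hq : q ≠ 0) (hqq : q - q⁻¹ ≠ 0)
    (hTD : IsTridiagonalPair A A' d Vs Vs' θ θ')
    (hA' : ∀ k, ∀ v ∈ Vs' k, A' v = (a' * q ^ (d - 2 * k)) • v)
    (hKsinv : ∀ i, ∀ v ∈ decDs0 d Vs Vs' i, Ksinv v = q ^ (d - 2 * i) • v) :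
    qComm q A' Ksinv = a' • 1 :=
  qComm_eq_smul_one hqq hTD.iSup_decDs0_eq_top hKsinv (hTD.map_decDs0_le_pred hA')
    (fun _ => zpow_eq_sq_mul_zpow hq (by ring))
    fun i => by linear_combination a' * zpow_mul_zpow_eq_one hq (m := d - 2 * (d - i)) (n := d - 2 * i) (by ring)

theorem map_sumIcc_le_of_qComm_A (hq : q ≠ 0) (hqq : q - q⁻¹ ≠ 0)
    (hinj : Function.Injective fun n : ℤ => q ^ n) (ha : a ≠ 0)
    (hTD : IsTridiagonalPair A A' d Vs Vs' θ θ')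
    (hA : ∀ k, ∀ v ∈ Vs k, A v = (a * q ^ (2 * k - d)) • v) (hE : qComm q A Ks = a • 1)
    (m : ℤ) : (sumIcc Vs m d).map Ks ≤ sumIcc Vs (m - 1) d :=
  hTD.decompV.map_sumIcc_le_of_qComm hq hqq hA
    (fun k l h => by have := hinj (mul_left_cancel₀ ha h); omega) (ε := -1)
    (fun j => by
      linear_combination a * zpow_eq_sq_mul_zpow hq (m := 2 * j - d) (n := 2 * (j + -1) - d)
        (by ring))
    hE ⟨by omega, by omega⟩ ⟨le_rfl, by omega⟩

theorem map_dual_sumIcc_le_of_qComm_A' (hq : q ≠ 0) (hqq : q - q⁻¹ ≠ 0)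
    (hinj : Function.Injective fun n : ℤ => q ^ n) (ha' : a' ≠ 0)
    (hTD : IsTridiagonalPair A A' d Vs Vs' θ θ')
    (hA' : ∀ k, ∀ v ∈ Vs' k, A' v = (a' * q ^ (d - 2 * k)) • v)
    (hE : qComm q A' Ksinv = a' • 1) (n : ℤ) :
    (sumIcc Vs' 0 n).map Ksinv ≤ sumIcc Vs' 0 (n + 1) :=
  hTD.decompV'.map_sumIcc_le_of_qComm hq hqq hA'
    (fun k l h => by have := hinj (mul_left_cancel₀ ha' h); omega) (ε := 1)
    (fun j => by
      linear_combination a' * zpow_eq_sq_mul_zpow hq (m := d - 2 * j) (n := d - 2 * (j + 1))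
        (by ring))
    hE ⟨le_rfl, by omega⟩ ⟨by omega, le_rfl⟩

theorem qComm_eq_of_dec0s0 {b : K} {B : Module.End K V} (hq : q ≠ 0) (hqq : q - q⁻¹ ≠ 0)
    (hTD : IsTridiagonalPair A A' d Vs Vs' θ θ')
    (hKsinv : ∀ i, ∀ v ∈ decDs0 d Vs Vs' i, Ksinv v = q ^ (d - 2 * i) • v)
    (hflag : ∀ n, (sumIcc Vs' 0 n).map Ksinv ≤ sumIcc Vs' 0 (n + 1))
    (hB : ∀ i, ∀ v ∈ dec0s0 d Vs Vs' i, B v = (b * q ^ (2 * i - d)) • v) :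
    qComm q Ksinv B = b • 1 :=
  qComm_eq_smul_one hqq hTD.iSup_dec0s0_eq_top hB (hTD.map_dec0s0_le_succ hKsinv hflag)
    (fun i => by
      linear_combination b * zpow_eq_sq_mul_zpow hq (m := 2 * (i + 1) - d) (n := 2 * i - d)
        (by ring))
    fun i => by linear_combination b * zpow_mul_zpow_eq_one hq (m := d - 2 * i) (n := 2 * i - d) (by ring)

theorem qComm_eq_of_decDsD {b' : K} {B' : Module.End K V} (hq : q ≠ 0) (hqq : q - q⁻¹ ≠ 0)
    (hTD : IsTridiagonalPair A A' d Vs Vs' θ θ')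
    (hKs : ∀ i, ∀ v ∈ decDs0 d Vs Vs' i, Ks v = q ^ (2 * i - d) • v)
    (hflag : ∀ m, (sumIcc Vs m d).map Ks ≤ sumIcc Vs (m - 1) d)
    (hB' : ∀ i, ∀ v ∈ decDsD d Vs Vs' i, B' v = (b' * q ^ (d - 2 * i)) • v) :
    qComm q Ks B' = b' • 1 :=
  qComm_eq_smul_one hqq hTD.iSup_decDsD_eq_top hB' (hTD.map_decDsD_le_pred hKs hflag)
    (fun i => by
      linear_combination b' * zpow_eq_sq_mul_zpow hq (m := d - 2 * (i - 1)) (n := d - 2 * i)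
        (by ring))
    fun i => by linear_combination b' * zpow_mul_zpow_eq_one hq (m := 2 * i - d) (n := d - 2 * i) (by ring)

end IsTridiagonalPair

theorem stmt9_general {K : Type*} [Field K]
    {V : Type*} [AddCommGroup V] [Module K V]
    (q : K) (hq0 : q ≠ 0) (hq : ∀ n : ℕ, 0 < n → q ^ n ≠ 1)
    (A A' : Module.End K V) (d : ℕ) (Vs Vs' : ℤ → Submodule K V) (θ θ' : ℤ → K)
    (hTD : IsTridiagonalPair A A' d Vs Vs' θ θ')
    (a a' : K) (ha : a ≠ 0) (ha' : a' ≠ 0)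
    (hθ : ∀ i : ℤ, 0 ≤ i → i ≤ (d : ℤ) → θ i = a * q ^ (2 * i - (d : ℤ)))
    (hθ' : ∀ i : ℤ, 0 ≤ i → i ≤ (d : ℤ) → θ' i = a' * q ^ ((d : ℤ) - 2 * i))
    (b b' : K)
    (B : Module.End K V)
    (hB : ∀ i : ℤ, 0 ≤ i → i ≤ (d : ℤ) → ∀ v ∈ dec0s0 d Vs Vs' i,
      B v = (b * q ^ (2 * i - (d : ℤ))) • v)
    (B' : Module.End K V)
    (hB' : ∀ i : ℤ, 0 ≤ i → i ≤ (d : ℤ) → ∀ v ∈ decDsD d Vs Vs' i,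
      B' v = (b' * q ^ ((d : ℤ) - 2 * i)) • v)
    (Ks : Module.End K V)
    (hKs : ∀ i : ℤ, 0 ≤ i → i ≤ (d : ℤ) → ∀ v ∈ decDs0 d Vs Vs' i,
      Ks v = (q ^ (2 * i - (d : ℤ))) • v)
    (Ksinv : Module.End K V)
    (hKsinv2 : Ksinv * Ks = 1)
    :
    (q - q⁻¹)⁻¹ • (q • (A * Ks) - q⁻¹ • (Ks * A)) = a • (1 : Module.End K V) ∧
    (q - q⁻¹)⁻¹ • (q • (Ksinv * B) - q⁻¹ • (B * Ksinv)) = b • (1 : Module.End K V) ∧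
    (q - q⁻¹)⁻¹ • (q • (A' * Ksinv) - q⁻¹ • (Ksinv * A')) = a' • (1 : Module.End K V) ∧
    (q - q⁻¹)⁻¹ • (q • (Ks * B') - q⁻¹ • (B' * Ks)) = b' • (1 : Module.End K V) := by
  have hqq := sub_inv_ne_zero_of_sq_ne_one hq0 (hq 2 two_pos)
  have hinj := zpow_injective_of_pow_ne_one hq0 hq
  have hA : ∀ k, ∀ v ∈ Vs k, A v = (a * q ^ (2 * k - d)) • v :=
    apply_eq_smul_of_eq_bot (fun _ => hTD.decompV.eq_bot_of_lt_or_gt) fun i h0 hd v hv => by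
      rw [hTD.eig i v hv, hθ i h0 hd]
  have hA' : ∀ k, ∀ v ∈ Vs' k, A' v = (a' * q ^ (d - 2 * k)) • v :=
    apply_eq_smul_of_eq_bot (fun _ => hTD.decompV'.eq_bot_of_lt_or_gt) fun i h0 hd v hv => by
      rw [hTD.eig' i v hv, hθ' i h0 hd]
  have hKsW := apply_eq_smul_of_eq_bot (fun i hi => sumIcc_inf_sumIcc_eq_bot (by omega)) hKs
  have hKsinvW : ∀ i, ∀ v ∈ decDs0 d Vs Vs' i, Ksinv v = q ^ ((d : ℤ) - 2 * i) • v :=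
    fun i v hv => apply_eq_smul_of_mul_eq_one hKsinv2 (hKsW i v hv)
      (zpow_mul_zpow_eq_one hq0 (by ring))
  have E1 := hTD.qComm_A_eq_of_decDs0 hq0 hqq hA hKsW
  have E3 := hTD.qComm_A'_eq_of_decDs0 hq0 hqq hA' hKsinvW
  exact ⟨E1, hTD.qComm_eq_of_dec0s0 hq0 hqq hKsinvW
      (hTD.map_dual_sumIcc_le_of_qComm_A' hq0 hqq hinj ha' hA' E3)
      (apply_eq_smul_of_eq_bot (fun i hi => sumIcc_inf_sumIcc_eq_bot (by omega)) hB),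
    E3, hTD.qComm_eq_of_decDsD hq0 hqq hKsW (hTD.map_sumIcc_le_of_qComm_A hq0 hqq hinj ha hA E1)
      (apply_eq_smul_of_eq_bot (fun i hi => sumIcc_inf_sumIcc_eq_bot (by omega)) hB')⟩

/-- the four relations involving `A, A*, B, B*` and `K*`. -/
theorem stmt9 {K : Type*} [Field K] [IsAlgClosed K]
    {V : Type*} [AddCommGroup V] [Module K V] [FiniteDimensional K V] [Nontrivial V]
    (q : K) (hq0 : q ≠ 0) (hq : ∀ n : ℕ, 0 < n → q ^ n ≠ 1)
    (A A' : Module.End K V) (d : ℕ) (Vs Vs' : ℤ → Submodule K V) (θ θ' : ℤ → K)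
    (hTD : IsTridiagonalPair A A' d Vs Vs' θ θ')
    (a a' : K) (ha : a ≠ 0) (ha' : a' ≠ 0)
    (hθ : ∀ i : ℤ, 0 ≤ i → i ≤ (d : ℤ) → θ i = a * q ^ (2 * i - (d : ℤ)))
    (hθ' : ∀ i : ℤ, 0 ≤ i → i ≤ (d : ℤ) → θ' i = a' * q ^ ((d : ℤ) - 2 * i))
    (b b' : K) (hb : b ≠ 0) (hb' : b' ≠ 0)
    (B : Module.End K V)
    (hB : ∀ i : ℤ, 0 ≤ i → i ≤ (d : ℤ) → ∀ v ∈ dec0s0 d Vs Vs' i,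
      B v = (b * q ^ (2 * i - (d : ℤ))) • v)
    (B' : Module.End K V)
    (hB' : ∀ i : ℤ, 0 ≤ i → i ≤ (d : ℤ) → ∀ v ∈ decDsD d Vs Vs' i,
      B' v = (b' * q ^ ((d : ℤ) - 2 * i)) • v)
    (Kop : Module.End K V)
    (hKop : ∀ i : ℤ, 0 ≤ i → i ≤ (d : ℤ) → ∀ v ∈ dec0sD d Vs Vs' i,
      Kop v = (q ^ (2 * i - (d : ℤ))) • v)
    (Ks : Module.End K V)
    (hKs : ∀ i : ℤ, 0 ≤ i → i ≤ (d : ℤ) → ∀ v ∈ decDs0 d Vs Vs' i,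
      Ks v = (q ^ (2 * i - (d : ℤ))) • v)
    (Kinv Ksinv : Module.End K V)
    (hKinv1 : Kop * Kinv = 1) (hKinv2 : Kinv * Kop = 1)
    (hKsinv1 : Ks * Ksinv = 1) (hKsinv2 : Ksinv * Ks = 1)
    :
    (q - q⁻¹)⁻¹ • (q • (A * Ks) - q⁻¹ • (Ks * A)) = a • (1 : Module.End K V) ∧
    (q - q⁻¹)⁻¹ • (q • (Ksinv * B) - q⁻¹ • (B * Ksinv)) = b • (1 : Module.End K V) ∧
    (q - q⁻¹)⁻¹ • (q • (A' * Ksinv) - q⁻¹ • (Ksinv * A')) = a' • (1 : Module.End K V) ∧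
    (q - q⁻¹)⁻¹ • (q • (Ks * B') - q⁻¹ • (B' * Ks)) = b' • (1 : Module.End K V) :=
  stmt9_general q hq0 hq A A' d Vs Vs' θ θ' hTD a a' ha ha' hθ hθ' b b' B hB B' hB' Ks hKs Ksinv
    hKsinv2
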